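/- Let g : ℝ² → ℂ be a smooth function satisfying the functional equation (1/2)·g_{ss}(s,t) − (1/2)·g_t(s,t) − (1/2)·g(s,t) = g(−s,−t) for all (s,t) ∈ ℝ². Then g satisfies the fourth-order partial differential equation g_{ssss} − g_{tt} − 2·g_{ss} − 3·g = 0 identically on ℝ². -/

import Mathlib

/-- Partial derivative with respect to the first variable of a complex-valued function of
two real variables. -/
noncomputable def pdS (g : ℝ → ℝ → ℂ) (s t : ℝ) : ℂ := deriv (fun u => g u t) s

/-- Partial derivative with respect to the second variable of a complex-valued function of
two real variables. -/
noncomputable def pdT (g : ℝ → ℝ → ℂ) (s t : ℝ) : ℂ := deriv (fun u => g s u) t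

section aux

variable (f : ℝ → ℝ → ℂ)

private lemma hFDS (hf : ContDiff ℝ (⊤ : ℕ∞) (Function.uncurry f)) (s t : ℝ) :
    HasDerivAt (fun u => f u t) (fderiv ℝ (Function.uncurry f) (s, t) ((1 : ℝ), (0 : ℝ))) s := by
  have h1 : HasDerivAt (fun u : ℝ => (u, t)) ((1 : ℝ), (0 : ℝ)) s :=
    (hasDerivAt_id s).prodMk (hasDerivAt_const s t)
  exact ((hf.differentiable (by simp) (s, t)).hasFDerivAt).comp_hasDerivAt s h1

private lemma hFDT (hf : ContDiff ℝ (⊤ : ℕ∞) (Function.uncurry f)) (s t : ℝ) :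
    HasDerivAt (fun v => f s v) (fderiv ℝ (Function.uncurry f) (s, t) ((0 : ℝ), (1 : ℝ))) t := by
  have h1 : HasDerivAt (fun v : ℝ => (s, v)) ((0 : ℝ), (1 : ℝ)) t :=
    (hasDerivAt_const t s).prodMk (hasDerivAt_id t)
  exact ((hf.differentiable (by simp) (s, t)).hasFDerivAt).comp_hasDerivAt t h1

private lemma pdS_eq (hf : ContDiff ℝ (⊤ : ℕ∞) (Function.uncurry f)) (s t : ℝ) :
    pdS f s t = fderiv ℝ (Function.uncurry f) (s, t) ((1 : ℝ), (0 : ℝ)) :=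
  (hFDS f hf s t).deriv

private lemma pdT_eq (hf : ContDiff ℝ (⊤ : ℕ∞) (Function.uncurry f)) (s t : ℝ) :
    pdT f s t = fderiv ℝ (Function.uncurry f) (s, t) ((0 : ℝ), (1 : ℝ)) :=
  (hFDT f hf s t).deriv

private lemma hasDerivAt_pdS (hf : ContDiff ℝ (⊤ : ℕ∞) (Function.uncurry f)) (s t : ℝ) :
    HasDerivAt (fun u => f u t) (pdS f s t) s := by
  rw [pdS_eq f hf s t]; exact hFDS f hf s t

private lemma hasDerivAt_pdT (hf : ContDiff ℝ (⊤ : ℕ∞) (Function.uncurry f)) (s t : ℝ) :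
    HasDerivAt (fun v => f s v) (pdT f s t) t := by
  rw [pdT_eq f hf s t]; exact hFDT f hf s t

private lemma uncurry_pdS (hf : ContDiff ℝ (⊤ : ℕ∞) (Function.uncurry f)) :
    Function.uncurry (pdS f)
      = fun p => fderiv ℝ (Function.uncurry f) p ((1 : ℝ), (0 : ℝ)) := by
  funext p
  exact pdS_eq f hf p.1 p.2

private lemma uncurry_pdT (hf : ContDiff ℝ (⊤ : ℕ∞) (Function.uncurry f)) :
    Function.uncurry (pdT f)
      = fun p => fderiv ℝ (Function.uncurry f) p ((0 : ℝ), (1 : ℝ)) := by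
  funext p
  exact pdT_eq f hf p.1 p.2

private lemma contDiff_pdS (hf : ContDiff ℝ (⊤ : ℕ∞) (Function.uncurry f)) :
    ContDiff ℝ (⊤ : ℕ∞) (Function.uncurry (pdS f)) := by
  rw [uncurry_pdS f hf]
  exact (ContinuousLinearMap.apply ℝ ℂ ((1 : ℝ), (0 : ℝ))).contDiff.comp
    (hf.fderiv_right (by simp))

private lemma contDiff_pdT (hf : ContDiff ℝ (⊤ : ℕ∞) (Function.uncurry f)) :
    ContDiff ℝ (⊤ : ℕ∞) (Function.uncurry (pdT f)) := by
  rw [uncurry_pdT f hf]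
  exact (ContinuousLinearMap.apply ℝ ℂ ((0 : ℝ), (1 : ℝ))).contDiff.comp
    (hf.fderiv_right (by simp))

private lemma fderiv_apply_vec (hf : ContDiff ℝ (⊤ : ℕ∞) (Function.uncurry f))
    (v w : ℝ × ℝ) (p : ℝ × ℝ) :
    fderiv ℝ (fun q => fderiv ℝ (Function.uncurry f) q v) p w
      = fderiv ℝ (fderiv ℝ (Function.uncurry f)) p w v := by
  have hF' : ContDiff ℝ (⊤ : ℕ∞) (fderiv ℝ (Function.uncurry f)) := hf.fderiv_right (by simp)
  have h : (fun q => fderiv ℝ (Function.uncurry f) q v)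
      = (ContinuousLinearMap.apply ℝ ℂ v) ∘ (fderiv ℝ (Function.uncurry f)) := rfl
  rw [h, fderiv_comp p (ContinuousLinearMap.apply ℝ ℂ v).differentiableAt
    (hF'.differentiable (by simp) p), ContinuousLinearMap.fderiv]
  rfl

private lemma pdS_pdT_comm (hf : ContDiff ℝ (⊤ : ℕ∞) (Function.uncurry f)) (s t : ℝ) :
    pdS (pdT f) s t = pdT (pdS f) s t := by
  have hF' : ContDiff ℝ (⊤ : ℕ∞) (fderiv ℝ (Function.uncurry f)) := hf.fderiv_right (by simp)
  have hsymm : ∀ v w : ℝ × ℝ,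
      fderiv ℝ (fderiv ℝ (Function.uncurry f)) (s, t) v w
        = fderiv ℝ (fderiv ℝ (Function.uncurry f)) (s, t) w v :=
    second_derivative_symmetric
      (fun y => (hf.differentiable (by simp) y).hasFDerivAt)
      ((hF'.differentiable (by simp) (s, t)).hasFDerivAt)
  rw [pdS_eq (pdT f) (contDiff_pdT f hf) s t, pdT_eq (pdS f) (contDiff_pdS f hf) s t,
    uncurry_pdT f hf, uncurry_pdS f hf, fderiv_apply_vec f hf, fderiv_apply_vec f hf]
  exact hsymm _ _

private lemma hasDerivAt_negslice_s (hf : ContDiff ℝ (⊤ : ℕ∞) (Function.uncurry f)) (s t : ℝ) :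
    HasDerivAt (fun u => f (-u) (-t)) (-(pdS f (-s) (-t))) s := by
  have h1 : HasDerivAt (fun u : ℝ => (-u, -t)) ((-1 : ℝ), (0 : ℝ)) s :=
    ((hasDerivAt_id s).neg).prodMk (hasDerivAt_const s (-t))
  have h2 := ((hf.differentiable (by simp) ((-s), (-t))).hasFDerivAt).comp_hasDerivAt s h1
  rw [pdS_eq f hf]
  have hv : ((-1 : ℝ), (0 : ℝ)) = -((1 : ℝ), (0 : ℝ)) := by simp [Prod.ext_iff]
  rw [hv, map_neg] at h2
  exact h2

private lemma hasDerivAt_negslice_t (hf : ContDiff ℝ (⊤ : ℕ∞) (Function.uncurry f)) (s t : ℝ) :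
    HasDerivAt (fun v => f (-s) (-v)) (-(pdT f (-s) (-t))) t := by
  have h1 : HasDerivAt (fun v : ℝ => (-s, -v)) ((0 : ℝ), (-1 : ℝ)) t :=
    (hasDerivAt_const t (-s)).prodMk ((hasDerivAt_id t).neg)
  have h2 := ((hf.differentiable (by simp) ((-s), (-t))).hasFDerivAt).comp_hasDerivAt t h1
  rw [pdT_eq f hf]
  have hv : ((0 : ℝ), (-1 : ℝ)) = -((0 : ℝ), (1 : ℝ)) := by simp [Prod.ext_iff]
  rw [hv, map_neg] at h2
  exact h2

end aux

/-- If a smooth `g : ℝ² → ℂ` satisfies the functional equation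
`(1/2)·g_{ss} − (1/2)·g_t − (1/2)·g = g∘τ` (where `τ(s,t) = (−s,−t)`), then it satisfies
the fourth-order PDE `g_{ssss} − g_{tt} − 2·g_{ss} − 3·g = 0`. -/
theorem stmt6 (g : ℝ → ℝ → ℂ)
    (hg : ContDiff ℝ (⊤ : ℕ∞) (Function.uncurry g))
    (heq : ∀ s t : ℝ,
      (1 / 2) * pdS (pdS g) s t - (1 / 2) * pdT g s t - (1 / 2) * g s t = g (-s) (-t)) :
    ∀ s t : ℝ,
      pdS (pdS (pdS (pdS g))) s t - pdT (pdT g) s t - 2 * pdS (pdS g) s t - 3 * g s t = 0 := by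
  -- smoothness of all iterated partials
  have h1 : ContDiff ℝ (⊤ : ℕ∞) (Function.uncurry (pdS g)) := contDiff_pdS g hg
  have h1t : ContDiff ℝ (⊤ : ℕ∞) (Function.uncurry (pdT g)) := contDiff_pdT g hg
  have h2 : ContDiff ℝ (⊤ : ℕ∞) (Function.uncurry (pdS (pdS g))) := contDiff_pdS _ h1
  have h2st : ContDiff ℝ (⊤ : ℕ∞) (Function.uncurry (pdS (pdT g))) := contDiff_pdS _ h1t
  have h3 : ContDiff ℝ (⊤ : ℕ∞) (Function.uncurry (pdS (pdS (pdS g)))) := contDiff_pdS _ h2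
  have h3st : ContDiff ℝ (⊤ : ℕ∞) (Function.uncurry (pdS (pdS (pdT g)))) := contDiff_pdS _ h2st
  -- Step A: differentiate the functional equation in s
  have stepA : ∀ s t : ℝ,
      (1 / 2) * pdS (pdS (pdS g)) s t - (1 / 2) * pdS (pdT g) s t - (1 / 2) * pdS g s t
        = -(pdS g (-s) (-t)) := by
    intro s t
    have hL : HasDerivAt (fun u => g (-u) (-t)) (-(pdS g (-s) (-t))) s :=
      hasDerivAt_negslice_s g hg s t
    have hR : HasDerivAt
        (fun u => (1 / 2 : ℂ) * pdS (pdS g) u t - (1 / 2) * pdT g u t - (1 / 2) * g u t)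
        ((1 / 2) * pdS (pdS (pdS g)) s t - (1 / 2) * pdS (pdT g) s t - (1 / 2) * pdS g s t)
        s :=
      ((((hasDerivAt_pdS _ h2 s t).const_mul (1 / 2 : ℂ)).sub
        ((hasDerivAt_pdS _ h1t s t).const_mul (1 / 2 : ℂ))).sub
        ((hasDerivAt_pdS _ hg s t).const_mul (1 / 2 : ℂ)))
    have hfun : (fun u => (1 / 2 : ℂ) * pdS (pdS g) u t - (1 / 2) * pdT g u t
        - (1 / 2) * g u t) = fun u => g (-u) (-t) := funext fun u => heq u t
    rw [hfun] at hR
    exact hR.unique hL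
  -- Step B: differentiate Step A in s
  have stepB : ∀ s t : ℝ,
      (1 / 2) * pdS (pdS (pdS (pdS g))) s t - (1 / 2) * pdS (pdS (pdT g)) s t
        - (1 / 2) * pdS (pdS g) s t = pdS (pdS g) (-s) (-t) := by
    intro s t
    have hL : HasDerivAt (fun u => -(pdS g (-u) (-t))) (pdS (pdS g) (-s) (-t)) s := by
      have := (hasDerivAt_negslice_s (pdS g) h1 s t).neg
      rwa [neg_neg] at this
    have hR : HasDerivAt
        (fun u => (1 / 2 : ℂ) * pdS (pdS (pdS g)) u t - (1 / 2) * pdS (pdT g) u t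
          - (1 / 2) * pdS g u t)
        ((1 / 2) * pdS (pdS (pdS (pdS g))) s t - (1 / 2) * pdS (pdS (pdT g)) s t
          - (1 / 2) * pdS (pdS g) s t) s :=
      ((((hasDerivAt_pdS _ h3 s t).const_mul (1 / 2 : ℂ)).sub
        ((hasDerivAt_pdS _ h2st s t).const_mul (1 / 2 : ℂ))).sub
        ((hasDerivAt_pdS _ h1 s t).const_mul (1 / 2 : ℂ)))
    have hfun : (fun u => (1 / 2 : ℂ) * pdS (pdS (pdS g)) u t - (1 / 2) * pdS (pdT g) u t
        - (1 / 2) * pdS g u t) = fun u => -(pdS g (-u) (-t)) :=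
      funext fun u => stepA u t
    rw [hfun] at hR
    exact hR.unique hL
  -- Step C: differentiate the functional equation in t
  have stepC : ∀ s t : ℝ,
      (1 / 2) * pdT (pdS (pdS g)) s t - (1 / 2) * pdT (pdT g) s t - (1 / 2) * pdT g s t
        = -(pdT g (-s) (-t)) := by
    intro s t
    have hL : HasDerivAt (fun v => g (-s) (-v)) (-(pdT g (-s) (-t))) t :=
      hasDerivAt_negslice_t g hg s t
    have hR : HasDerivAt
        (fun v => (1 / 2 : ℂ) * pdS (pdS g) s v - (1 / 2) * pdT g s v - (1 / 2) * g s v)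
        ((1 / 2) * pdT (pdS (pdS g)) s t - (1 / 2) * pdT (pdT g) s t - (1 / 2) * pdT g s t)
        t :=
      ((((hasDerivAt_pdT _ h2 s t).const_mul (1 / 2 : ℂ)).sub
        ((hasDerivAt_pdT _ h1t s t).const_mul (1 / 2 : ℂ))).sub
        ((hasDerivAt_pdT _ hg s t).const_mul (1 / 2 : ℂ)))
    have hfun : (fun v => (1 / 2 : ℂ) * pdS (pdS g) s v - (1 / 2) * pdT g s v
        - (1 / 2) * g s v) = fun v => g (-s) (-v) := funext fun v => heq s v
    rw [hfun] at hR
    exact hR.unique hL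
  -- conclude
  intro s t
  have eqX : pdS (pdS (pdT g)) s t = pdT (pdS (pdS g)) s t := by
    have hswap1 : pdS (pdT g) = pdT (pdS g) :=
      funext fun a => funext fun b => pdS_pdT_comm g hg a b
    rw [hswap1]
    exact pdS_pdT_comm (pdS g) h1 s t
  have hB := stepB s t
  have hC := stepC s t
  have hE := heq s t
  have h4 := heq (-s) (-t)
  simp only [neg_neg] at h4
  rw [eqX] at hB
  linear_combination (2 : ℂ) * hB + 2 * hC - 2 * hE + 4 * h4
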